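/- If B is a *-algebra and δ is a derivation of B into the bimodule Γ(δ) spanned by elements a·δb, then the assignment a·δ*b := δ(b*)·a* defines a derivation δ* of B, and (δ*)* = δ; i.e., * is an involution on the set of derivations up to the equivalence δ ≤ δ' and δ' ≤ δ. -/
import Mathlib


noncomputable section

/-- A derivation of an algebra `B` into a `B`-bimodule `M`. -/
structure BimodDeriv (B M : Type) [Ring B] [Algebra ℂ B]
    [AddCommGroup M] [Module ℂ M] where
  l : B →ₗ[ℂ] M →ₗ[ℂ] M
  r : B →ₗ[ℂ] M →ₗ[ℂ] M
  l_mul : ∀ a b m, l (a * b) m = l a (l b m)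
  l_one : ∀ m, l 1 m = m
  r_mul : ∀ a b m, r (a * b) m = r b (r a m)
  r_one : ∀ m, r 1 m = m
  lr_comm : ∀ a b m, l a (r b m) = r b (l a m)
  d : B →ₗ[ℂ] M
  leibniz : ∀ a b, d (a * b) = l a (d b) + r b (d a)

def ConjMod (M : Type) : Type := M

namespace ConjMod

variable {M : Type} [AddCommGroup M] [Module ℂ M]

def mk : M → ConjMod M := id
def val : ConjMod M → M := id

instance : AddCommGroup (ConjMod M) := inferInstanceAs (AddCommGroup M)

instance instSMul : SMul ℂ (ConjMod M) :=
  ⟨fun c m => mk ((starRingEnd ℂ c) • m.val)⟩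

omit [Module ℂ M] in
lemma val_injective : Function.Injective (val : ConjMod M → M) := fun _ _ h => h

omit [Module ℂ M] in
lemma val_mk (m : M) : (mk m).val = m := rfl

lemma val_smul (c : ℂ) (m : ConjMod M) : (c • m).val = (starRingEnd ℂ c) • m.val := rfl

omit [Module ℂ M] in
lemma val_add (x y : ConjMod M) : (x + y).val = x.val + y.val := rfl

omit [Module ℂ M] in
lemma val_zero : (0 : ConjMod M).val = 0 := rfl

instance instModule : Module ℂ (ConjMod M) where
  smul := (· • ·)
  one_smul m := val_injective (by rw [val_smul, map_one, one_smul])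
  mul_smul x y m := val_injective (by rw [val_smul, map_mul, mul_smul, val_smul, val_smul])
  smul_zero c := val_injective (by rw [val_smul, val_zero, smul_zero])
  smul_add c x y := val_injective
    (by rw [val_smul, val_add, smul_add, val_add, val_smul, val_smul])
  add_smul x y m := val_injective
    (by rw [val_smul, map_add, add_smul, val_add, val_smul, val_smul])
  zero_smul m := val_injective (by rw [val_smul, map_zero, zero_smul, val_zero])

end ConjMod

section Aux

variable {B M : Type} [Ring B] [Algebra ℂ B] [StarRing B] [StarModule ℂ B]
  [AddCommGroup M] [Module ℂ M]

open ConjMod in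
/-- A linear endomorphism of `ConjMod M` induced by a ℂ-linear endomorphism of `M`. -/
def conjMap (f : M →ₗ[ℂ] M) : ConjMod M →ₗ[ℂ] ConjMod M where
  toFun m := mk (f m.val)
  map_add' x y := val_injective (by rw [val_mk, val_add, map_add]; rfl)
  map_smul' c x := val_injective (by
    rw [val_mk, val_smul, map_smul]
    show _ = (c • mk (f x.val)).val
    rw [val_smul, val_mk])

open ConjMod in
/-- The star derivation `δ*`, defined on the conjugate module by
`δ*.d b = δ.d b*`, with left action `δ.r ∘ star` and right action `δ.l ∘ star`. -/
def starDeriv (δ : BimodDeriv B M) : BimodDeriv B (ConjMod M) where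
  l := { toFun := fun a => conjMap (δ.r (star a))
         map_add' := fun a b => by
           ext m
           exact val_injective (by
             show δ.r (star (a + b)) m.val =
               (conjMap (δ.r (star a)) m + conjMap (δ.r (star b)) m).val
             rw [val_add, star_add, map_add]; rfl)
         map_smul' := fun c a => by
           ext m
           exact val_injective (by
             show δ.r (star (c • a)) m.val = (c • (conjMap (δ.r (star a)) m)).val
             rw [val_smul, star_smul, map_smul]; rfl) }
  r := { toFun := fun a => conjMap (δ.l (star a))
         map_add' := fun a b => by
           ext m
           exact val_injective (by
             show δ.l (star (a + b)) m.val =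
               (conjMap (δ.l (star a)) m + conjMap (δ.l (star b)) m).val
             rw [val_add, star_add, map_add]; rfl)
         map_smul' := fun c a => by
           ext m
           exact val_injective (by
             show δ.l (star (c • a)) m.val = (c • (conjMap (δ.l (star a)) m)).val
             rw [val_smul, star_smul, map_smul]; rfl) }
  l_mul a b m := val_injective (by
    show δ.r (star (a * b)) m.val = δ.r (star a) (δ.r (star b) m.val)
    rw [star_mul, δ.r_mul])
  l_one m := val_injective (by
    show δ.r (star (1 : B)) m.val = m.val
    rw [star_one, δ.r_one])
  r_mul a b m := val_injective (by
    show δ.l (star (a * b)) m.val = δ.l (star b) (δ.l (star a) m.val)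
    rw [star_mul, δ.l_mul])
  r_one m := val_injective (by
    show δ.l (star (1 : B)) m.val = m.val
    rw [star_one, δ.l_one])
  lr_comm a b m := val_injective (by
    show δ.r (star a) (δ.l (star b) m.val) = δ.l (star b) (δ.r (star a) m.val)
    exact (δ.lr_comm (star b) (star a) m.val).symm)
  d := { toFun := fun b => mk (δ.d (star b))
         map_add' := fun a b => val_injective (by
           rw [val_mk, star_add, map_add]; rfl)
         map_smul' := fun c a => val_injective (by
           show δ.d (star (c • a)) = (c • mk (δ.d (star a))).val
           rw [val_smul, star_smul, map_smul, val_mk]; rfl) }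
  leibniz a b := val_injective (by
    show δ.d (star (a * b)) = (conjMap (δ.r (star a)) (mk (δ.d (star b))) +
      conjMap (δ.l (star b)) (mk (δ.d (star a)))).val
    show δ.d (star (a * b)) = δ.r (star a) (δ.d (star b)) + δ.l (star b) (δ.d (star a))
    rw [star_mul, δ.leibniz, add_comm])

end Aux

/-- If `B` is a unital ℂ-*-algebra and `δ` a derivation of `B`
(into the bimodule `Γ(δ)` spanned by the elements `a·δb`), then
`a·δ*b := δ(b*)·a*` defines a derivation `δ*` of `B`, and `(δ*)* = δ`.
Derivations are identified when `δ ≤ δ'` and `δ' ≤ δ`, where `δ' ≤ δ` means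
that `a·δb ↦ a·δ'b` is well-defined on `Γ(δ)`, i.e. every vanishing linear
combination `Σᵢ aᵢ·δbᵢ = 0` also satisfies `Σᵢ aᵢ·δ'bᵢ = 0`.  Accordingly,
the statement reads: there is a derivation `δs` whose combinations
`Σᵢ aᵢ·δs(bᵢ)` vanish exactly when `Σᵢ δ(bᵢ*)·aᵢ*` vanish (this is `δ*`,
well-defined), and the combinations `Σᵢ δs(bᵢ*)·aᵢ*` (i.e. `aᵢ·(δs)*(bᵢ)`)
vanish exactly when `Σᵢ aᵢ·δ(bᵢ)` vanish (i.e. `(δ*)* = δ`). -/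
theorem star_is_involution_on_derivations
    (B : Type) [Ring B] [Algebra ℂ B] [StarRing B] [StarModule ℂ B]
    (M : Type) [AddCommGroup M] [Module ℂ M]
    (δ : BimodDeriv B M) :
    ∃ (M' : Type) (_ : AddCommGroup M') (_ : Module ℂ M')
      (δs : BimodDeriv B M'),
      (∀ L : List (B × B),
        ((L.map fun p => δs.l p.1 (δs.d p.2)).sum = 0 ↔
         (L.map fun p => δ.r (star p.1) (δ.d (star p.2))).sum = 0)) ∧
      (∀ L : List (B × B),
        ((L.map fun p => δs.r (star p.1) (δs.d (star p.2))).sum = 0 ↔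
         (L.map fun p => δ.l p.1 (δ.d p.2)).sum = 0)) := by
  refine ⟨ConjMod M, inferInstance, inferInstance, starDeriv δ, ?_, ?_⟩
  · intro L
    have h : (L.map fun p => (starDeriv δ).l p.1 ((starDeriv δ).d p.2)).sum.val =
        (L.map fun p => δ.r (star p.1) (δ.d (star p.2))).sum := by
      induction L with
      | nil => rfl
      | cons p L ih =>
        simp only [List.map_cons, List.sum_cons, ConjMod.val_add, ih]
        rfl
    constructor
    · intro h0; rw [← h, h0]; rfl
    · intro h0; exact ConjMod.val_injective (by rw [h, h0]; rfl)
  · intro L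
    have h : (L.map fun p => (starDeriv δ).r (star p.1) ((starDeriv δ).d (star p.2))).sum.val =
        (L.map fun p => δ.l p.1 (δ.d p.2)).sum := by
      induction L with
      | nil => rfl
      | cons p L ih =>
        simp only [List.map_cons, List.sum_cons, ConjMod.val_add, ih]
        congr 1
        show δ.l (star (star p.1)) (δ.d (star (star p.2))) = δ.l p.1 (δ.d p.2)
        rw [star_star, star_star]
    constructor
    · intro h0; rw [← h, h0]; rfl
    · intro h0; exact ConjMod.val_injective (by rw [h, h0]; rfl)

end
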